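/- arXiv:1308.5955 — 2 statements merged into one kernel-verified Lean document; each statement's English description precedes it below -/
import Mathlib

section
/- Let N ≥ 1, let Ω ⊂ ℝ^N be a nonempty bounded open set, and let C₁ > 0 be a Poincaré constant for Ω, i.e. ∫_Ω |w(x)|² dx ≤ C₁ ∫_Ω |∇w(x)|² dx for every twice continuously differentiable w : ℝ^N → ℂ whose support is a compact subset of Ω. Then for every k ∈ ℝ with 0 ≤ k ≤ 1/(2√C₁) and every twice continuously differentiable w : ℝ^N → ℂ whose support is a compact subset of Ω, one has ∫_Ω |w(x)|² dx ≤ 2 C₁² ∫_Ω |Δw(x) + k² w(x)|² dx. -/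
open MeasureTheory

/-- The Laplacian of a function `u : ℝ^N → ℂ`, defined as the sum of the second
partial derivatives along the standard coordinate directions. -/
noncomputable def laplacian {N : ℕ} (u : EuclideanSpace ℝ (Fin N) → ℂ)
    (x : EuclideanSpace ℝ (Fin N)) : ℂ :=
  ∑ j : Fin N,
    fderiv ℝ (fun y => fderiv ℝ u y (EuclideanSpace.single j 1)) x (EuclideanSpace.single j 1)

/-- The squared norm of the gradient of `u : ℝ^N → ℂ`:
`|∇u(x)|² = ∑_j |∂u/∂x_j(x)|²`. -/
noncomputable def gradNormSq {N : ℕ} (u : EuclideanSpace ℝ (Fin N) → ℂ)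
    (x : EuclideanSpace ℝ (Fin N)) : ℝ :=
  ∑ j : Fin N, ‖fderiv ℝ u x (EuclideanSpace.single j 1)‖ ^ 2

/-!
Integrating by parts (no boundary terms, as `w` has compact support) gives Green's identity
`∫ |∇w|² = -Re ∫ w̄ Δw`. With `f = Δw + k² w` this reads `∫ |∇w|² = k² ∫ |w|² - Re ∫ w̄ f`, and
AM–GM bounds the last term by `(1 / (4 C₁)) ∫ |w|² + C₁ ∫ |f|²`. Feeding this into the Poincaré
inequality, the condition `C₁ k² ≤ 1/4` makes the coefficient of `∫ |w|²` on the right at most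
`1/2`, so it can be absorbed into the left-hand side.
-/

open ComplexConjugate

lemma mul_le_sq_div_add_mul_sq {C : ℝ} (hC : 0 < C) (a b : ℝ) :
    a * b ≤ a ^ 2 / (4 * C) + C * b ^ 2 := by
  rw [div_add' _ _ _ (by positivity), le_div_iff₀ (by positivity)]
  nlinarith [sq_nonneg (a - 2 * C * b)]

section Integrability

variable {E : Type*} [TopologicalSpace E] [MeasurableSpace E] [OpensMeasurableSpace E]
  {μ : Measure E} [IsFiniteMeasureOnCompacts μ]

lemma integrable_conj_mul {f g : E → ℂ} (hf : Continuous f) (hg : Continuous g)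
    (hgs : HasCompactSupport g) : Integrable (fun x => conj (f x) * g x) μ :=
  (hf.star.mul hg).integrable_of_hasCompactSupport hgs.mul_left

lemma integrable_norm_sq {F : Type*} [NormedAddCommGroup F] {g : E → F} (hg : Continuous g)
    (hgs : HasCompactSupport g) : Integrable (fun x => ‖g x‖ ^ 2) μ := by
  simp only [sq]
  exact (hg.norm.mul hg.norm).integrable_of_hasCompactSupport hgs.norm.mul_left

end Integrability

lemma ContDiff.contDiff_one_fderiv_apply {E F : Type*} [NormedAddCommGroup E] [NormedSpace ℝ E]
    [NormedAddCommGroup F] [NormedSpace ℝ F] {f : E → F} (hf : ContDiff ℝ 2 f) (v : E) :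
    ContDiff ℝ 1 (fun x => fderiv ℝ f x v) :=
  (hf.fderiv_right (by norm_num)).clm_apply contDiff_const

section IntegrationByParts

variable {E : Type*} [NormedAddCommGroup E] [NormedSpace ℝ E] [MeasurableSpace E] [BorelSpace E]
  {μ : Measure E} {w : E → ℂ}

lemma integrable_conj_mul_fderiv_fderiv_apply [IsFiniteMeasureOnCompacts μ]
    (hw : ContDiff ℝ 2 w) (hcs : HasCompactSupport w) (v : E) :
    Integrable (fun x => conj (w x) * fderiv ℝ (fun y => fderiv ℝ w y v) x v) μ :=
  integrable_conj_mul hw.continuous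
    (((hw.contDiff_one_fderiv_apply v).continuous_fderiv one_ne_zero).clm_apply continuous_const)
    ((hcs.fderiv_apply ℝ v).fderiv_apply ℝ v)

theorem integral_conj_mul_fderiv_fderiv_apply [FiniteDimensional ℝ E] [μ.IsAddHaarMeasure]
    (hw : ContDiff ℝ 2 w) (hcs : HasCompactSupport w) (v : E) :
    ∫ x, conj (w x) * fderiv ℝ (fun y => fderiv ℝ w y v) x v ∂μ
      = -∫ x, ((‖fderiv ℝ w x v‖ ^ 2 : ℝ) : ℂ) ∂μ := by
  have hwv := hw.contDiff_one_fderiv_apply v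
  have hwv_cs : HasCompactSupport (fun x => fderiv ℝ w x v) := hcs.fderiv_apply ℝ v
  have hconj : ∀ x, fderiv ℝ (fun y => conj (w y)) x v = conj (fderiv ℝ w x v) := fun x => by
    rw [show (fun y => conj (w y)) = fun y => star (w y) from rfl, fderiv_star]; rfl
  have hibp := integral_mul_fderiv_eq_neg_fderiv_mul_of_integrable (μ := μ) (v := v)
    (f := fun y => conj (w y)) (g := fun y => fderiv ℝ w y v)
    (by simpa only [hconj] using integrable_conj_mul hwv.continuous hwv.continuous hwv_cs)
    (integrable_conj_mul_fderiv_fderiv_apply hw hcs v)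
    (integrable_conj_mul hw.continuous hwv.continuous hwv_cs)
    (fun x _ => (hw.differentiable two_ne_zero x).star)
    (fun x _ => hwv.differentiable one_ne_zero x)
  simp only [hibp, hconj, Complex.conj_mul', Complex.ofReal_pow]

end IntegrationByParts

section Laplacian

variable {N : ℕ} {w : EuclideanSpace ℝ (Fin N) → ℂ}

lemma ContDiff.continuous_laplacian (hw : ContDiff ℝ 2 w) : Continuous (laplacian w) :=
  continuous_finsetSum _ fun _ _ =>
    ((hw.contDiff_one_fderiv_apply _).continuous_fderiv one_ne_zero).clm_apply continuous_const

lemma support_laplacian_subset : Function.support (laplacian w) ⊆ tsupport w := by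
  refine Function.support_subset_iff'.2 fun x hx => Finset.sum_eq_zero fun j _ => ?_
  set v := EuclideanSpace.single j (1 : ℝ)
  have hsub : tsupport (fun x => fderiv ℝ (fun y => fderiv ℝ w y v) x v) ⊆ tsupport w :=
    (tsupport_fderiv_apply_subset ℝ v).trans (tsupport_fderiv_apply_subset ℝ v)
  exact image_eq_zero_of_notMem_tsupport (f := fun x => fderiv ℝ (fun y => fderiv ℝ w y v) x v)
    fun h => hx (hsub h)

lemma support_gradNormSq_subset : Function.support (gradNormSq w) ⊆ tsupport w := by
  refine Function.support_subset_iff'.2 fun x hx => Finset.sum_eq_zero fun j _ => ?_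
  set v := EuclideanSpace.single j (1 : ℝ)
  have hsub : tsupport (fun x => fderiv ℝ w x v) ⊆ tsupport w := tsupport_fderiv_apply_subset ℝ v
  rw [image_eq_zero_of_notMem_tsupport (f := fun x => fderiv ℝ w x v) fun h => hx (hsub h),
    norm_zero, zero_pow two_ne_zero]

lemma support_laplacian_add_mul_subset (c : ℂ) :
    Function.support (fun x => laplacian w x + c * w x) ⊆ tsupport w :=
  Function.support_subset_iff'.2 fun x hx => by
    simp [Function.support_subset_iff'.1 support_laplacian_subset x hx,
      image_eq_zero_of_notMem_tsupport hx]

theorem integral_conj_mul_laplacian (hw : ContDiff ℝ 2 w) (hcs : HasCompactSupport w) :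
    ∫ x, conj (w x) * laplacian w x = -((∫ x, gradNormSq w x : ℝ) : ℂ) := by
  simp only [laplacian, gradNormSq, Finset.mul_sum]
  rw [integral_finsetSum _ fun j _ => integrable_conj_mul_fderiv_fderiv_apply hw hcs _,
    integral_finsetSum _ fun j _ => integrable_norm_sq
      (hw.contDiff_one_fderiv_apply _).continuous (hcs.fderiv_apply ℝ _),
    Complex.ofReal_sum, ← Finset.sum_neg_distrib]
  refine Finset.sum_congr rfl fun j _ => ?_
  rw [integral_conj_mul_fderiv_fderiv_apply hw hcs, integral_complex_ofReal]

theorem integral_gradNormSq_eq (hw : ContDiff ℝ 2 w) (hcs : HasCompactSupport w) (c : ℝ) :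
    ∫ x, gradNormSq w x
      = c * (∫ x, ‖w x‖ ^ 2) - (∫ x, conj (w x) * (laplacian w x + c * w x)).re := by
  have hwf : Integrable fun x => conj (w x) * (laplacian w x + c * w x) :=
    integrable_conj_mul hw.continuous
      (hw.continuous_laplacian.add (continuous_const.mul hw.continuous))
      (hcs.mono' (support_laplacian_add_mul_subset _))
  have hw2 : Integrable (fun x => (c : ℂ) * ((‖w x‖ ^ 2 : ℝ) : ℂ)) :=
    (integrable_norm_sq hw.continuous hcs).ofReal.const_mul _
  have hpt : ∀ x, conj (w x) * laplacian w x
      = conj (w x) * (laplacian w x + c * w x) - (c : ℂ) * ((‖w x‖ ^ 2 : ℝ) : ℂ) := fun x => by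
    rw [Complex.ofReal_pow, ← Complex.conj_mul']
    ring
  have hgreen := integral_conj_mul_laplacian hw hcs
  rw [integral_congr_ae (.of_forall hpt), integral_sub hwf hw2, integral_const_mul,
    integral_complex_ofReal] at hgreen
  have hre := congrArg Complex.re hgreen
  simp only [Complex.neg_re, Complex.ofReal_re, Complex.sub_re, Complex.re_ofReal_mul] at hre
  linarith

theorem integral_gradNormSq_le (hw : ContDiff ℝ 2 w) (hcs : HasCompactSupport w) (c : ℝ) {C : ℝ}
    (hC : 0 < C) :
    ∫ x, gradNormSq w x ≤ (c + 1 / (4 * C)) * (∫ x, ‖w x‖ ^ 2)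
      + C * ∫ x, ‖laplacian w x + c * w x‖ ^ 2 := by
  set f := fun x => laplacian w x + c * w x
  have hf : Continuous f := hw.continuous_laplacian.add (continuous_const.mul hw.continuous)
  have hfs : HasCompactSupport f := hcs.mono' (support_laplacian_add_mul_subset _)
  have hw2 := integrable_norm_sq (μ := volume) hw.continuous hcs
  have hf2 := integrable_norm_sq (μ := volume) hf hfs
  have hwf := integrable_conj_mul (μ := volume) hw.continuous hf hfs
  have hcross : -(∫ x, conj (w x) * f x).re ≤ ∫ x, ‖w x‖ * ‖f x‖ :=
    calc -(∫ x, conj (w x) * f x).re ≤ ‖∫ x, conj (w x) * f x‖ := by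
          simpa using Complex.re_le_norm (-∫ x, conj (w x) * f x)
      _ ≤ ∫ x, ‖conj (w x) * f x‖ := norm_integral_le_integral_norm _
      _ = ∫ x, ‖w x‖ * ‖f x‖ := by simp only [norm_mul, Complex.norm_conj]
  have hamgm : ∫ x, ‖w x‖ * ‖f x‖ ≤ (∫ x, ‖w x‖ ^ 2) / (4 * C) + C * ∫ x, ‖f x‖ ^ 2 := by
    rw [← integral_div, ← integral_const_mul, ← integral_add (hw2.div_const _) (hf2.const_mul _)]
    exact integral_mono (by simpa only [norm_mul, Complex.norm_conj] using hwf.norm)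
      ((hw2.div_const _).add (hf2.const_mul _)) fun x => mul_le_sq_div_add_mul_sq hC _ _
  have hG := integral_gradNormSq_eq hw hcs c
  simp only [f] at hcross hamgm
  linarith [show (c + 1 / (4 * C)) * (∫ x, ‖w x‖ ^ 2)
    = c * (∫ x, ‖w x‖ ^ 2) + (∫ x, ‖w x‖ ^ 2) / (4 * C) by ring]

theorem integral_norm_sq_le_of_poincare (hw : ContDiff ℝ 2 w) (hcs : HasCompactSupport w)
    {k C : ℝ} (hC : 0 < C) (hk : C * k ^ 2 ≤ 1 / 4)
    (hP : ∫ x, ‖w x‖ ^ 2 ≤ C * ∫ x, gradNormSq w x) :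
    ∫ x, ‖w x‖ ^ 2 ≤ 2 * C ^ 2 * ∫ x, ‖laplacian w x + (k : ℂ) ^ 2 * w x‖ ^ 2 := by
  set I := ∫ x, ‖w x‖ ^ 2
  set F := ∫ x, ‖laplacian w x + (k : ℂ) ^ 2 * w x‖ ^ 2
  have hI : 0 ≤ I := integral_nonneg fun x => sq_nonneg _
  have hG := integral_gradNormSq_le hw hcs (k ^ 2) hC
  rw [Complex.ofReal_pow] at hG
  have hhalf : I ≤ I / 2 + C ^ 2 * F :=
    calc I ≤ C * ∫ x, gradNormSq w x := hP
      _ ≤ C * ((k ^ 2 + 1 / (4 * C)) * I + C * F) := by gcongr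
      _ = (C * k ^ 2 + 1 / 4) * I + C ^ 2 * F := by field_simp
      _ ≤ (1 / 4 + 1 / 4) * I + C ^ 2 * F := by gcongr
      _ = I / 2 + C ^ 2 * F := by ring
  linarith

end Laplacian

lemma mul_sq_le_of_le_one_div_two_mul_sqrt {k C : ℝ} (hC : 0 < C) (hk0 : 0 ≤ k)
    (hk : k ≤ 1 / (2 * Real.sqrt C)) : C * k ^ 2 ≤ 1 / 4 := by
  have hk2 := pow_le_pow_left₀ hk0 hk 2
  rw [div_pow, mul_pow, Real.sq_sqrt hC.le] at hk2
  calc C * k ^ 2 ≤ C * (1 ^ 2 / (2 ^ 2 * C)) := by gcongr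
    _ = 1 / 4 := by field_simp; norm_num

theorem helmholtz_l2_bound_explicit_general {N : ℕ}
    (Ω : Set (EuclideanSpace ℝ (Fin N)))
    (C₁ : ℝ) (hC₁ : 0 < C₁)
    (hPoincare : ∀ (w : EuclideanSpace ℝ (Fin N) → ℂ), ContDiff ℝ 2 w →
      HasCompactSupport w → tsupport w ⊆ Ω →
        (∫ x in Ω, ‖w x‖ ^ 2) ≤ C₁ * ∫ x in Ω, gradNormSq w x) :
    ∀ (k : ℝ), 0 ≤ k → k ≤ 1 / (2 * Real.sqrt C₁) →
      ∀ (w : EuclideanSpace ℝ (Fin N) → ℂ), ContDiff ℝ 2 w →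
        HasCompactSupport w → tsupport w ⊆ Ω →
          (∫ x in Ω, ‖w x‖ ^ 2)
            ≤ 2 * C₁ ^ 2 * ∫ x in Ω, ‖laplacian w x + (k : ℂ) ^ 2 * w x‖ ^ 2 := by
  intro k hk0 hkle w hw hcs hsub
  have hout : ∀ x ∉ Ω, x ∉ tsupport w := fun x hx h => hx (hsub h)
  have hwΩ : ∫ x in Ω, ‖w x‖ ^ 2 = ∫ x, ‖w x‖ ^ 2 :=
    setIntegral_eq_integral_of_forall_compl_eq_zero fun x hx => by
      simp [image_eq_zero_of_notMem_tsupport (hout x hx)]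
  have hgΩ : ∫ x in Ω, gradNormSq w x = ∫ x, gradNormSq w x :=
    setIntegral_eq_integral_of_forall_compl_eq_zero fun x hx =>
      Function.support_subset_iff'.1 support_gradNormSq_subset x (hout x hx)
  have hfΩ : ∫ x in Ω, ‖laplacian w x + (k : ℂ) ^ 2 * w x‖ ^ 2
      = ∫ x, ‖laplacian w x + (k : ℂ) ^ 2 * w x‖ ^ 2 :=
    setIntegral_eq_integral_of_forall_compl_eq_zero fun x hx => by
      simp [Function.support_subset_iff'.1 (support_laplacian_add_mul_subset _) x (hout x hx)]
  have hP := hPoincare w hw hcs hsub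
  rw [hwΩ, hgΩ] at hP
  rw [hwΩ, hfΩ]
  exact integral_norm_sq_le_of_poincare hw hcs hC₁
    (mul_sq_le_of_le_one_div_two_mul_sqrt hC₁ hk0 hkle) hP

/-- Quantitative form of Lemma 3.3: if `C₁` is a Poincaré constant for `Ω`, then for
`0 ≤ k ≤ 1/(2√C₁)` and every `C²` function `w` compactly supported in `Ω`,
`∫_Ω |w|² ≤ 2 C₁² ∫_Ω |Δw + k² w|²`. -/
theorem helmholtz_l2_bound_explicit {N : ℕ} (hN : 1 ≤ N)
    (Ω : Set (EuclideanSpace ℝ (Fin N))) (hΩne : Ω.Nonempty)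
    (hΩopen : IsOpen Ω) (hΩbdd : Bornology.IsBounded Ω)
    (C₁ : ℝ) (hC₁ : 0 < C₁)
    (hPoincare : ∀ (w : EuclideanSpace ℝ (Fin N) → ℂ), ContDiff ℝ 2 w →
      HasCompactSupport w → tsupport w ⊆ Ω →
        (∫ x in Ω, ‖w x‖ ^ 2) ≤ C₁ * ∫ x in Ω, gradNormSq w x) :
    ∀ (k : ℝ), 0 ≤ k → k ≤ 1 / (2 * Real.sqrt C₁) →
      ∀ (w : EuclideanSpace ℝ (Fin N) → ℂ), ContDiff ℝ 2 w →
        HasCompactSupport w → tsupport w ⊆ Ω →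
          (∫ x in Ω, ‖w x‖ ^ 2)
            ≤ 2 * C₁ ^ 2 * ∫ x in Ω, ‖laplacian w x + (k : ℂ) ^ 2 * w x‖ ^ 2 :=
  helmholtz_l2_bound_explicit_general Ω C₁ hC₁ hPoincare
end

section
/- Let N ≥ 1, let Ω ⊂ ℝ^N be a nonempty bounded open set, let k ∈ ℝ, and let n* > 0 and n, ñ ∈ ℂ with |n| ≤ n* and |ñ| ≤ n*. Let w : ℝ^N → ℂ be twice continuously differentiable with support a compact subset of Ω, and let v : ℝ^N → ℂ be twice continuously differentiable, such that Δv(x) + k² ñ² v(x) = 0 for all x ∈ Ω and Δw(x) + k² n² w(x) = v(x) for all x ∈ Ω. Then ∫_Ω |v(x)|² dx ≤ 2 k² (n*)² (∫_Ω |v(x)|² dx)^{1/2} (∫_Ω |w(x)|² dx)^{1/2}. -/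
/-!
Multiply `Δw + k²n²w = v` by `v̄` and integrate over `Ω`. Since `w` is compactly supported in `Ω`,
two integrations by parts in each coordinate direction move the Laplacian onto `v̄` without
boundary terms, and `Δv̄ = -k² conj(ñ)² v̄` then gives
`∫_Ω |v|² = k² (n² - conj(ñ)²) ∫_Ω w v̄`. The coefficient has modulus at most `2 k² (n*)²`, and
Cauchy–Schwarz bounds the remaining integral.
-/

open MeasureTheory

open ComplexConjugate

section SecondDerivative

variable {E F : Type*} [NormedAddCommGroup E] [NormedSpace ℝ E] [NormedAddCommGroup F]
  [NormedSpace ℝ F]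

theorem ContDiff.contDiff_fderiv_apply_const {f : E → F} (hf : ContDiff ℝ 2 f) (e : E) :
    ContDiff ℝ 1 (fderiv ℝ f · e) :=
  (hf.fderiv_right (m := 1) le_rfl).clm_apply contDiff_const

theorem ContDiff.continuous_fderiv_fderiv_apply {f : E → F} (hf : ContDiff ℝ 2 f) (e : E) :
    Continuous fun x ↦ fderiv ℝ (fderiv ℝ f · e) x e :=
  ((hf.contDiff_fderiv_apply_const e).continuous_fderiv one_ne_zero).clm_apply continuous_const

variable [MeasurableSpace E] [BorelSpace E] [FiniteDimensional ℝ E] {μ : Measure E}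
  [μ.IsAddHaarMeasure] {𝕜 : Type*} [NormedField 𝕜] [NormedAlgebra ℝ 𝕜]

theorem integral_fderiv_fderiv_mul_eq_mul_fderiv_fderiv {f g : E → 𝕜} (hf : ContDiff ℝ 2 f)
    (hfs : HasCompactSupport f) (hg : ContDiff ℝ 2 g) (e : E) :
    ∫ x, fderiv ℝ (fderiv ℝ f · e) x e * g x ∂μ = ∫ x, f x * fderiv ℝ (fderiv ℝ g · e) x e ∂μ := by
  have hf' := hf.contDiff_fderiv_apply_const e
  have hg' := hg.contDiff_fderiv_apply_const e
  have hf's : HasCompactSupport (fderiv ℝ f · e) := hfs.fderiv_apply (𝕜 := ℝ) e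
  have hf'g' : Integrable (fun x ↦ fderiv ℝ f x e * fderiv ℝ g x e) μ :=
    (hf'.continuous.mul hg'.continuous).integrable_of_hasCompactSupport hf's.mul_right
  -- with `∂ = ∂_e`: `parts₁ : ∫ ∂f ∂g = -∫ ∂²f g` and `parts₂ : ∫ f ∂²g = -∫ ∂f ∂g`
  have parts₁ := integral_mul_fderiv_eq_neg_fderiv_mul_of_integrable (μ := μ) (v := e)
    ((hf.continuous_fderiv_fderiv_apply e).mul hg.continuous |>.integrable_of_hasCompactSupport
      (hf's.fderiv_apply (𝕜 := ℝ) e).mul_right)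
    hf'g'
    ((hf'.continuous.mul hg.continuous).integrable_of_hasCompactSupport hf's.mul_right)
    (fun x _ ↦ hf'.differentiable one_ne_zero x) (fun x _ ↦ hg.differentiable two_ne_zero x)
  have parts₂ := integral_mul_fderiv_eq_neg_fderiv_mul_of_integrable (μ := μ) (v := e)
    hf'g'
    ((hf.continuous.mul (hg.continuous_fderiv_fderiv_apply e)).integrable_of_hasCompactSupport
      hfs.mul_right)
    ((hf.continuous.mul hg'.continuous).integrable_of_hasCompactSupport hfs.mul_right)
    (fun x _ ↦ hf.differentiable two_ne_zero x) (fun x _ ↦ hg'.differentiable one_ne_zero x)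
  rw [parts₂, parts₁, neg_neg]

end SecondDerivative

theorem fderiv_conj_apply {E : Type*} [NormedAddCommGroup E] [NormedSpace ℝ E] (f : E → ℂ)
    (x e : E) : fderiv ℝ (fun y ↦ conj (f y)) x e = conj (fderiv ℝ f x e) := by
  change fderiv ℝ (fun y ↦ star (f y)) x e = star _
  rw [fderiv_star]
  rfl

section Laplacian

variable {N : ℕ} {u w : EuclideanSpace ℝ (Fin N) → ℂ}

theorem ContDiff.continuous_laplacian_s5 (hu : ContDiff ℝ 2 u) : Continuous (laplacian u) :=
  continuous_finsetSum _ fun _ _ ↦ hu.continuous_fderiv_fderiv_apply _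

theorem laplacian_eq_zero_of_notMem_tsupport {x : EuclideanSpace ℝ (Fin N)}
    (hx : x ∉ tsupport u) : laplacian u x = 0 := by
  refine Finset.sum_eq_zero fun j _ ↦ ?_
  rw [fderiv_of_notMem_tsupport (𝕜 := ℝ) fun h ↦ hx (tsupport_fderiv_apply_subset ℝ _ h)]
  rfl

theorem HasCompactSupport.laplacian (hu : HasCompactSupport u) :
    HasCompactSupport (laplacian u) :=
  hu.mono' fun _ hx ↦ by_contra fun h ↦ hx (laplacian_eq_zero_of_notMem_tsupport h)

theorem laplacian_conj (u : EuclideanSpace ℝ (Fin N) → ℂ) (x : EuclideanSpace ℝ (Fin N)) :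
    laplacian (fun y ↦ conj (u y)) x = conj (laplacian u x) := by
  simp only [laplacian, fderiv_conj_apply, map_sum]

theorem integral_laplacian_mul_eq_mul_laplacian (hw : ContDiff ℝ 2 w) (hws : HasCompactSupport w)
    (hu : ContDiff ℝ 2 u) :
    ∫ x, laplacian w x * u x = ∫ x, w x * laplacian u x := by
  simp only [laplacian, Finset.sum_mul, Finset.mul_sum]
  rw [integral_finsetSum, integral_finsetSum]
  · exact Finset.sum_congr rfl fun j _ ↦ integral_fderiv_fderiv_mul_eq_mul_fderiv_fderiv hw hws hu _
  · exact fun _ _ ↦ Continuous.integrable_of_hasCompactSupport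
      (hw.continuous.mul (hu.continuous_fderiv_fderiv_apply _)) hws.mul_right
  · exact fun _ _ ↦ Continuous.integrable_of_hasCompactSupport
      ((hw.continuous_fderiv_fderiv_apply _).mul hu.continuous)
      ((hws.fderiv_apply (𝕜 := ℝ) _).fderiv_apply (𝕜 := ℝ) _).mul_right

end Laplacian

theorem transmission_integral_identity {N : ℕ} {Ω : Set (EuclideanSpace ℝ (Fin N))}
    (hΩ : MeasurableSet Ω) {a b : ℂ} {w v : EuclideanSpace ℝ (Fin N) → ℂ}
    (hw : ContDiff ℝ 2 w) (hws : HasCompactSupport w) (hwΩ : tsupport w ⊆ Ω)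
    (hv : ContDiff ℝ 2 v)
    (hveq : ∀ x ∈ Ω, laplacian v x + b * v x = 0)
    (hweq : ∀ x ∈ Ω, laplacian w x + a * w x = v x) :
    ∫ x in Ω, v x * conj (v x) = (a - conj b) * ∫ x in Ω, w x * conj (v x) := by
  have hv' : ContDiff ℝ 2 fun x ↦ conj (v x) := Complex.conjCLE.contDiff.comp hv
  have hwΩ' : ∀ x ∉ Ω, x ∉ tsupport w := fun x hx h ↦ hx (hwΩ h)
  have green : ∫ x in Ω, laplacian w x * conj (v x) = -conj b * ∫ x in Ω, w x * conj (v x) := by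
    calc ∫ x in Ω, laplacian w x * conj (v x)
        = ∫ x, laplacian w x * conj (v x) :=
          setIntegral_eq_integral_of_forall_compl_eq_zero fun x hx ↦ by
            rw [laplacian_eq_zero_of_notMem_tsupport (hwΩ' x hx), zero_mul]
      _ = ∫ x, w x * conj (laplacian v x) := by
          simp_rw [integral_laplacian_mul_eq_mul_laplacian hw hws hv', laplacian_conj]
      _ = ∫ x in Ω, w x * conj (laplacian v x) :=
          (setIntegral_eq_integral_of_forall_compl_eq_zero fun x hx ↦ by
            rw [image_eq_zero_of_notMem_tsupport (hwΩ' x hx), zero_mul]).symm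
      _ = ∫ x in Ω, -conj b * (w x * conj (v x)) := by
          refine setIntegral_congr_fun hΩ fun x hx ↦ ?_
          rw [eq_neg_of_add_eq_zero_left (hveq x hx)]
          simp only [map_neg, map_mul]
          ring
      _ = -conj b * ∫ x in Ω, w x * conj (v x) := integral_const_mul _ _
  have hint {f : EuclideanSpace ℝ (Fin N) → ℂ} (hf : Continuous f) (hfs : HasCompactSupport f) :
      IntegrableOn (fun x ↦ f x * conj (v x)) Ω :=
    ((hf.mul hv'.continuous).integrable_of_hasCompactSupport hfs.mul_right).integrableOn
  calc ∫ x in Ω, v x * conj (v x)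
      = ∫ x in Ω, (laplacian w x * conj (v x) + a * (w x * conj (v x))) :=
        setIntegral_congr_fun hΩ fun x hx ↦ by rw [← hweq x hx]; ring
    _ = (a - conj b) * ∫ x in Ω, w x * conj (v x) := by
        rw [integral_add (hint hw.continuous_laplacian_s5 hws.laplacian)
          ((hint hw.continuous hws).const_mul a), integral_const_mul, green]
        ring

theorem norm_integral_mul_conj_le {α 𝕜 : Type*} [MeasurableSpace α] {μ : Measure α} [RCLike 𝕜]
    {f g : α → 𝕜} (hf : MemLp f 2 μ) (hg : MemLp g 2 μ) :
    ‖∫ x, f x * conj (g x) ∂μ‖ ≤ √(∫ x, ‖f x‖ ^ 2 ∂μ) * √(∫ x, ‖g x‖ ^ 2 ∂μ) := by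
  have holder := integral_mul_norm_le_Lp_mul_Lq Real.HolderConjugate.two_two
    (by simpa using hf) (by simpa using hg)
  simp only [Real.rpow_two] at holder
  rw [Real.sqrt_eq_rpow, Real.sqrt_eq_rpow]
  calc ‖∫ x, f x * conj (g x) ∂μ‖ ≤ ∫ x, ‖f x * conj (g x)‖ ∂μ := norm_integral_le_integral_norm _
    _ = ∫ x, ‖f x‖ * ‖g x‖ ∂μ := by simp only [norm_mul, RCLike.norm_conj]
    _ ≤ _ := holder

theorem Continuous.memLp_restrict_of_isBounded {X E : Type*} [PseudoMetricSpace X]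
    [ProperSpace X] [MeasurableSpace X] [OpensMeasurableSpace X] {μ : Measure X}
    [IsFiniteMeasureOnCompacts μ] [NormedAddCommGroup E] {f : X → E} (hf : Continuous f)
    {s : Set X} (hs : Bornology.IsBounded s) (p : ENNReal) : MemLp f p (μ.restrict s) := by
  have hK := hs.isCompact_closure
  obtain ⟨C, hC⟩ := hK.exists_bound_of_continuousOn hf.continuousOn
  have := isFiniteMeasure_restrict.2 (hK.measure_lt_top (μ := μ)).ne
  exact (MemLp.of_bound hf.aestronglyMeasurable C
    (ae_restrict_of_forall_mem isClosed_closure.measurableSet hC)).mono_measure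
    (Measure.restrict_mono subset_closure le_rfl)

theorem transmission_cauchy_schwarz_estimate_general {N : ℕ}
    (Ω : Set (EuclideanSpace ℝ (Fin N)))
    (hΩopen : IsOpen Ω) (hΩbdd : Bornology.IsBounded Ω)
    (k : ℝ) (nstar : ℝ)
    (n ntilde : ℂ) (hn : ‖n‖ ≤ nstar) (hntilde : ‖ntilde‖ ≤ nstar)
    (w v : EuclideanSpace ℝ (Fin N) → ℂ)
    (hw : ContDiff ℝ 2 w) (hwsupp : HasCompactSupport w) (hwΩ : tsupport w ⊆ Ω)
    (hv : ContDiff ℝ 2 v)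
    (hveq : ∀ x ∈ Ω, laplacian v x + (k : ℂ) ^ 2 * ntilde ^ 2 * v x = 0)
    (hweq : ∀ x ∈ Ω, laplacian w x + (k : ℂ) ^ 2 * n ^ 2 * w x = v x) :
    (∫ x in Ω, ‖v x‖ ^ 2)
      ≤ 2 * k ^ 2 * nstar ^ 2 * Real.sqrt (∫ x in Ω, ‖v x‖ ^ 2)
        * Real.sqrt (∫ x in Ω, ‖w x‖ ^ 2) := by
  have hnorm_sq : (∫ x in Ω, ‖v x‖ ^ 2) = ‖∫ x in Ω, v x * conj (v x)‖ := by
    simp_rw [Complex.mul_conj', ← Complex.ofReal_pow, integral_complex_ofReal, Complex.norm_real,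
      Real.norm_of_nonneg (integral_nonneg fun x ↦ sq_nonneg ‖v x‖)]
  have hcoef : ‖(k : ℂ) ^ 2 * n ^ 2 - conj ((k : ℂ) ^ 2 * ntilde ^ 2)‖ ≤ 2 * k ^ 2 * nstar ^ 2 := by
    calc _ ≤ ‖(k : ℂ) ^ 2 * n ^ 2‖ + ‖(k : ℂ) ^ 2 * ntilde ^ 2‖ := by
          rw [← Complex.norm_conj ((k : ℂ) ^ 2 * ntilde ^ 2)]; exact norm_sub_le _ _
      _ ≤ k ^ 2 * nstar ^ 2 + k ^ 2 * nstar ^ 2 := by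
          simp only [norm_mul, norm_pow, Complex.norm_real, Real.norm_eq_abs, sq_abs]
          gcongr
      _ = 2 * k ^ 2 * nstar ^ 2 := by ring
  calc (∫ x in Ω, ‖v x‖ ^ 2) = ‖∫ x in Ω, v x * conj (v x)‖ := hnorm_sq
    _ = ‖(k : ℂ) ^ 2 * n ^ 2 - conj ((k : ℂ) ^ 2 * ntilde ^ 2)‖ * ‖∫ x in Ω, w x * conj (v x)‖ := by
        rw [transmission_integral_identity hΩopen.measurableSet hw hwsupp hwΩ hv hveq hweq,
          norm_mul]
    _ ≤ 2 * k ^ 2 * nstar ^ 2 * (√(∫ x in Ω, ‖w x‖ ^ 2) * √(∫ x in Ω, ‖v x‖ ^ 2)) :=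
        mul_le_mul hcoef (norm_integral_mul_conj_le
          (hw.continuous.memLp_restrict_of_isBounded hΩbdd 2)
          (hv.continuous.memLp_restrict_of_isBounded hΩbdd 2)) (norm_nonneg _) (by positivity)
    _ = _ := by ring

/-- Estimate (3.9): if `Δv + k² ntilde² v = 0` on `Ω` and `Δw + k² n² w = v` on `Ω`, with
`|n| ≤ n*`, `|ntilde| ≤ n*`, `w` of class `C²` compactly supported in `Ω` and `v` of class
`C²`, then `∫_Ω |v|² ≤ 2 k² (n*)² (∫_Ω |v|²)^{1/2} (∫_Ω |w|²)^{1/2}`. -/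
theorem transmission_cauchy_schwarz_estimate {N : ℕ} (hN : 1 ≤ N)
    (Ω : Set (EuclideanSpace ℝ (Fin N))) (hΩne : Ω.Nonempty)
    (hΩopen : IsOpen Ω) (hΩbdd : Bornology.IsBounded Ω)
    (k : ℝ) (nstar : ℝ) (hnstar : 0 < nstar)
    (n ntilde : ℂ) (hn : ‖n‖ ≤ nstar) (hntilde : ‖ntilde‖ ≤ nstar)
    (w v : EuclideanSpace ℝ (Fin N) → ℂ)
    (hw : ContDiff ℝ 2 w) (hwsupp : HasCompactSupport w) (hwΩ : tsupport w ⊆ Ω)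
    (hv : ContDiff ℝ 2 v)
    (hveq : ∀ x ∈ Ω, laplacian v x + (k : ℂ) ^ 2 * ntilde ^ 2 * v x = 0)
    (hweq : ∀ x ∈ Ω, laplacian w x + (k : ℂ) ^ 2 * n ^ 2 * w x = v x) :
    (∫ x in Ω, ‖v x‖ ^ 2)
      ≤ 2 * k ^ 2 * nstar ^ 2 * Real.sqrt (∫ x in Ω, ‖v x‖ ^ 2)
        * Real.sqrt (∫ x in Ω, ‖w x‖ ^ 2) :=
  transmission_cauchy_schwarz_estimate_general Ω hΩopen hΩbdd k nstar n ntilde hn hntilde w v hw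
    hwsupp hwΩ hv hveq hweq
end
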